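/- arXiv:1804.08503 — 4 statements merged into one kernel-verified Lean document; each statement's English description precedes it below -/
import Mathlib

section
/- Let $a > 0$ be a real number. Suppose $z \in \mathbb{C}^5$ satisfies ($z_3 z_4 z_5 \ne 0$ or $z_1 z_3 z_5 \ne 0$ or $z_1 z_2 z_5 \ne 0$ or $z_2 z_4 z_5 \ne 0$), and suppose $t \in \mathbb{C}$ and $\lambda \in \mathbb{C}\setminus\{0\}$ satisfy $(e^{-2\pi t} z_1,\ e^{2\pi i t} z_2,\ e^{2\pi i (1+ia) t} z_3,\ e^{-2\pi t} z_4,\ z_5) = (\lambda z_1, \lambda z_2, \lambda z_3, \lambda z_4, \lambda z_5)$. Then $t = 0$ and $\lambda = 1$. -/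
/-! The last coordinate is fixed by the action, so `λ = 1` and each coordinate `zⱼ ≠ 0` forces
its multiplier to be `1`. The points of `U(𝕋*)` have `z₁ ≠ 0` or `z₄ ≠ 0`, which gives
`exp(-2πt) = 1`, i.e. `t ∈ iℤ`, and `z₂ ≠ 0` or `z₃ ≠ 0`, which gives `exp(2πit) = 1` or
`exp(2πi(1+ia)t) = 1`, i.e. `t ∈ ℤ` or `(1+ia)t ∈ ℤ`. For `t = in`, each of `t` and `(1+ia)t = in - an`
is real only if `n = 0`. -/

open Complex
open scoped Real

lemma Complex.im_eq_zero_of_exp_two_pi_I_mul_eq_one {w : ℂ} (h : exp (2 * π * I * w) = 1) :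
    w.im = 0 := by
  obtain ⟨n, hn⟩ := exp_eq_one_iff.mp h
  have hw : w = n := mul_left_cancel₀ two_pi_I_ne_zero (by rw [hn]; ring)
  simp [hw]

lemma Complex.re_eq_zero_of_exp_neg_two_pi_mul_eq_one {t : ℂ} (h : exp (-(2 * π) * t) = 1) :
    t.re = 0 := by
  have h' : exp (2 * π * I * (I * t)) = 1 := by
    rw [← h]; congr 1; linear_combination (2 * π * t) * I_sq
  simpa using im_eq_zero_of_exp_two_pi_I_mul_eq_one h'

theorem action_free_general (a : ℝ) (z : Fin 5 → ℂ)
    (hz : z 2 * z 3 * z 4 ≠ 0 ∨ z 0 * z 2 * z 4 ≠ 0 ∨ z 0 * z 1 * z 4 ≠ 0 ∨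
      z 1 * z 3 * z 4 ≠ 0)
    (t : ℂ) (lam : ℂ)
    (h1 : Complex.exp (-(2 * (Real.pi : ℂ)) * t) * z 0 = lam * z 0)
    (h2 : Complex.exp (2 * (Real.pi : ℂ) * Complex.I * t) * z 1 = lam * z 1)
    (h3 : Complex.exp (2 * (Real.pi : ℂ) * Complex.I * (1 + Complex.I * (a : ℂ)) * t) * z 2 =
      lam * z 2)
    (h4 : Complex.exp (-(2 * (Real.pi : ℂ)) * t) * z 3 = lam * z 3)
    (h5 : z 4 = lam * z 4) :
    t = 0 ∧ lam = 1 := by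
  obtain ⟨hz03, hz12, hz4⟩ : (z 0 ≠ 0 ∨ z 3 ≠ 0) ∧ (z 1 ≠ 0 ∨ z 2 ≠ 0) ∧ z 4 ≠ 0 := by
    simp only [mul_ne_zero_iff] at hz
    tauto
  obtain rfl : lam = 1 := (mul_eq_right₀ hz4).mp h5.symm
  have hre : t.re = 0 := by
    apply re_eq_zero_of_exp_neg_two_pi_mul_eq_one
    rcases hz03 with hz0 | hz3
    · exact mul_right_cancel₀ hz0 h1
    · exact mul_right_cancel₀ hz3 h4
  have him : t.im = 0 := by
    rcases hz12 with hz1 | hz2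
    · exact im_eq_zero_of_exp_two_pi_I_mul_eq_one (mul_right_cancel₀ hz1 h2)
    · rw [mul_assoc _ _ t] at h3
      simpa [hre] using im_eq_zero_of_exp_two_pi_I_mul_eq_one (mul_right_cancel₀ hz2 h3)
  exact ⟨Complex.ext hre him, rfl⟩

/-- Freeness of the `ℂ_Λ`-action on `U(𝕋*)`: if `z ∈ ℂ⁵` lies in the relevant open set and
`(e^{-2πt}z₁, e^{2πit}z₂, e^{2πi(1+ia)t}z₃, e^{-2πt}z₄, z₅) = λ·z` with `λ ≠ 0`,
then `t = 0` and `λ = 1`. -/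
theorem action_free (a : ℝ) (ha : 0 < a) (z : Fin 5 → ℂ)
    (hz : z 2 * z 3 * z 4 ≠ 0 ∨ z 0 * z 2 * z 4 ≠ 0 ∨ z 0 * z 1 * z 4 ≠ 0 ∨
      z 1 * z 3 * z 4 ≠ 0)
    (t : ℂ) (lam : ℂ) (hlam : lam ≠ 0)
    (h1 : Complex.exp (-(2 * (Real.pi : ℂ)) * t) * z 0 = lam * z 0)
    (h2 : Complex.exp (2 * (Real.pi : ℂ) * Complex.I * t) * z 1 = lam * z 1)
    (h3 : Complex.exp (2 * (Real.pi : ℂ) * Complex.I * (1 + Complex.I * (a : ℂ)) * t) * z 2 =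
      lam * z 2)
    (h4 : Complex.exp (-(2 * (Real.pi : ℂ)) * t) * z 3 = lam * z 3)
    (h5 : z 4 = lam * z 4) :
    t = 0 ∧ lam = 1 :=
  action_free_general a z hz t lam h1 h2 h3 h4 h5
end

section
/- Let $a > 0$ be a real number. Let $X = \{ (u,v,z,w) \in \mathbb{C}\times\mathbb{C}\times\mathbb{R}\times\mathbb{C} : |v|^2+z^2 = 1,\ -|u|^2 + \tfrac{a(z+1)}{2} - |w|^2 = -1 \}$, with the $\mathbb{R}$-action $t \cdot (u,v,z,w) = (e^{-2\pi i t}u,\ e^{2\pi i a t}v,\ z,\ e^{-2\pi i t}w)$, and let $E = \{ (u,v,z) \in \mathbb{C}\times\mathbb{C}\times\mathbb{R} : |v|^2+z^2=1,\ |u|^2 - \tfrac{a(z+1)}{2} < 1 \}$. Then the map $E \to X$, $(u,v,z) \mapsto (u, v, z, \sqrt{1 - |u|^2 + a(z+1)/2})$, is well defined and induces a bijection from the quotient of $E$ by the equivalence relation $(u,v,z) \sim (u, e^{2\pi i a l} v, z)$ (for $l \in \mathbb{Z}$) onto the set of $\mathbb{R}$-orbits of $\{ (u,v,z,w) \in X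 : w \ne 0 \}$. -/
open Complex

/-- The level set `X = {(u,v,z,w) : |v|² + z² = 1, -|u|² + a(z+1)/2 - |w|² = -1}`. -/
def cutLevelSet (a : ℝ) : Set (ℂ × ℂ × ℝ × ℂ) :=
  {p | ‖p.2.1‖ ^ 2 + p.2.2.1 ^ 2 = 1 ∧
    -‖p.1‖ ^ 2 + a * (p.2.2.1 + 1) / 2 - ‖p.2.2.2‖ ^ 2 = -1}

/-- The part of the level set where the last coordinate `w` is nonzero. -/
def cutLevelSetW (a : ℝ) : Set (ℂ × ℂ × ℝ × ℂ) :=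
  {p ∈ cutLevelSet a | p.2.2.2 ≠ 0}

/-- The open set `E = {(u,v,z) : |v|² + z² = 1, |u|² - a(z+1)/2 < 1} ⊆ ℂ × S²`. -/
def openPiece (a : ℝ) : Set (ℂ × ℂ × ℝ) :=
  {p | ‖p.2.1‖ ^ 2 + p.2.2 ^ 2 = 1 ∧ ‖p.1‖ ^ 2 - a * (p.2.2 + 1) / 2 < 1}

/-- The map `E → X`, `(u,v,z) ↦ (u, v, z, √(1 - |u|² + a(z+1)/2))`. -/
noncomputable def cutSection (a : ℝ) (p : ℂ × ℂ × ℝ) : ℂ × ℂ × ℝ × ℂ :=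
  (p.1, p.2.1, p.2.2,
    ((Real.sqrt (1 - ‖p.1‖ ^ 2 + a * (p.2.2 + 1) / 2) : ℝ) : ℂ))

/-- The `ℝ`-action `t • (u,v,z,w) = (e^{-2πit}u, e^{2πiat}v, z, e^{-2πit}w)`. -/
noncomputable def cutAction (a t : ℝ) (p : ℂ × ℂ × ℝ × ℂ) : ℂ × ℂ × ℝ × ℂ :=
  (Complex.exp (-(2 * (Real.pi : ℂ) * Complex.I * (t : ℂ))) * p.1,
    Complex.exp (2 * (Real.pi : ℂ) * Complex.I * (a : ℂ) * (t : ℂ)) * p.2.1,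
    p.2.2.1,
    Complex.exp (-(2 * (Real.pi : ℂ) * Complex.I * (t : ℂ))) * p.2.2.2)

/-- On `E`, the equivalence relation `(u,v,z) ∼ (u, e^{2πial}v, z)` for `l ∈ ℤ`. -/
def gammaRel (a : ℝ) (p q : openPiece a) : Prop :=
  ∃ l : ℤ, (q : ℂ × ℂ × ℝ) =
    ((p : ℂ × ℂ × ℝ).1,
      Complex.exp (2 * (Real.pi : ℂ) * Complex.I * (a : ℂ) * (l : ℂ)) * (p : ℂ × ℂ × ℝ).2.1,
      (p : ℂ × ℂ × ℝ).2.2)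

/-- On `{x ∈ X : w ≠ 0}`, the relation of being in the same `ℝ`-orbit. -/
def orbitRel (a : ℝ) (x y : cutLevelSetW a) : Prop :=
  ∃ t : ℝ, (y : ℂ × ℂ × ℝ × ℂ) = cutAction a t (x : ℂ × ℂ × ℝ × ℂ)

lemma abs_exp_neg_two_pi (t : ℝ) :
    ‖(Complex.exp (-(2 * (Real.pi : ℂ) * Complex.I * (t : ℂ))))‖ = 1 := by
  rw [Complex.norm_exp]; norm_num

lemma abs_exp_two_pi_a (a t : ℝ) :
    ‖(Complex.exp (2 * (Real.pi : ℂ) * Complex.I * (a : ℂ) * (t : ℂ)))‖ = 1 := by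
  rw [Complex.norm_exp]; norm_num

lemma cutAction_add (a t s : ℝ) (p : ℂ × ℂ × ℝ × ℂ) :
    cutAction a s (cutAction a t p) = cutAction a (t + s) p := by
  simp only [cutAction, ← mul_assoc, ← Complex.exp_add, Prod.mk.injEq]
  refine ⟨?_, ?_, trivial, ?_⟩ <;> · congr 1; push_cast; ring

lemma cutAction_zero (a : ℝ) (p : ℂ × ℂ × ℝ × ℂ) : cutAction a 0 p = p := by
  simp [cutAction]

lemma cutAction_mem {a : ℝ} (t : ℝ) {x : ℂ × ℂ × ℝ × ℂ} (hx : x ∈ cutLevelSetW a) :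
    cutAction a t x ∈ cutLevelSetW a := by
  obtain ⟨⟨h1, h2⟩, h3⟩ := hx
  refine ⟨⟨?_, ?_⟩, ?_⟩
  · simpa [cutAction, map_mul, abs_exp_two_pi_a] using h1
  · simpa [cutAction, map_mul, abs_exp_neg_two_pi] using h2
  · simp only [cutAction]
    exact mul_ne_zero (Complex.exp_ne_zero _) h3

lemma orbitRel_equiv (a : ℝ) : Equivalence (orbitRel a) := by
  constructor
  · intro x; exact ⟨0, (cutAction_zero a _).symm⟩
  · rintro x y ⟨t, ht⟩
    refine ⟨-t, ?_⟩
    rw [ht, cutAction_add, add_neg_cancel, cutAction_zero]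
  · rintro x y z ⟨t, ht⟩ ⟨s, hs⟩
    exact ⟨t + s, by rw [hs, ht, cutAction_add]⟩

lemma cutSection_mem {a : ℝ} {p : ℂ × ℂ × ℝ} (hp : p ∈ openPiece a) :
    cutSection a p ∈ cutLevelSetW a := by
  obtain ⟨h1, h2⟩ := hp
  have hs : 0 < 1 - ‖p.1‖ ^ 2 + a * (p.2.2 + 1) / 2 := by linarith
  refine ⟨⟨h1, ?_⟩, ?_⟩
  · have habs : ‖((Real.sqrt (1 - ‖p.1‖ ^ 2 + a * (p.2.2 + 1) / 2) : ℝ) : ℂ)‖ ^ 2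
        = 1 - ‖p.1‖ ^ 2 + a * (p.2.2 + 1) / 2 := by
      rw [Complex.norm_real, Real.norm_eq_abs, _root_.abs_of_nonneg (Real.sqrt_nonneg _), Real.sq_sqrt hs.le]
    simp only [cutSection]
    rw [habs]; ring
  · simp only [cutSection, ne_eq, Complex.ofReal_eq_zero]
    positivity

lemma exp_neg_two_pi_int (l : ℤ) :
    Complex.exp (-(2 * (Real.pi : ℂ) * Complex.I * (l : ℂ))) = 1 := by
  rw [show -(2 * (Real.pi : ℂ) * Complex.I * (l : ℂ)) = (-l : ℤ) * (2 * Real.pi * Complex.I) by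
    push_cast; ring]
  exact Complex.exp_int_mul_two_pi_mul_I _

/-- The map `(u,v,z) ↦ (u, v, z, √(1 - |u|² + a(z+1)/2))` from `E` to `X` is well defined
(it lands in the part of `X` where `w ≠ 0`) and induces a bijection from the quotient of `E`
by `(u,v,z) ∼ (u, e^{2πial}v, z)` onto the set of `ℝ`-orbits of `{x ∈ X : w ≠ 0}`. -/
theorem cut_open_piece_bijection (a : ℝ) (ha : 0 < a) :
    ∃ F : Quot (gammaRel a) → Quot (orbitRel a),
      Function.Bijective F ∧
        ∀ p : openPiece a, ∃ hx : cutSection a (p : ℂ × ℂ × ℝ) ∈ cutLevelSetW a,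
          F (Quot.mk (gammaRel a) p) =
            Quot.mk (orbitRel a) ⟨cutSection a (p : ℂ × ℂ × ℝ), hx⟩ := by
  classical
  set f : openPiece a → Quot (orbitRel a) := fun p =>
    Quot.mk (orbitRel a) ⟨cutSection a (p : ℂ × ℂ × ℝ), cutSection_mem p.2⟩ with hf
  have hresp : ∀ p q : openPiece a, gammaRel a p q → f p = f q := by
    rintro p q ⟨l, hl⟩
    refine (Quot.sound ⟨(l : ℝ), ?_⟩)
    have hu : (q : ℂ × ℂ × ℝ).1 = (p : ℂ × ℂ × ℝ).1 := by rw [hl]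
    have hz : (q : ℂ × ℂ × ℝ).2.2 = (p : ℂ × ℂ × ℝ).2.2 := by rw [hl]
    have hv : (q : ℂ × ℂ × ℝ).2.1
        = Complex.exp (2 * (Real.pi : ℂ) * Complex.I * (a : ℂ) * (l : ℂ))
          * (p : ℂ × ℂ × ℝ).2.1 := by rw [hl]
    simp only [cutSection, cutAction, Prod.mk.injEq, hu, hz, hv]
    refine ⟨?_, ?_, trivial, ?_⟩
    · rw [show ((l : ℝ) : ℂ) = (l : ℂ) by push_cast; ring, exp_neg_two_pi_int, one_mul]
    · norm_num
    · rw [show ((l : ℝ) : ℂ) = (l : ℂ) by push_cast; ring, exp_neg_two_pi_int, one_mul]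
  refine ⟨Quot.lift f hresp, ⟨?_, ?_⟩, fun p => ⟨cutSection_mem p.2, rfl⟩⟩
  · -- injective
    rintro ⟨p⟩ ⟨q⟩ h
    have h' : orbitRel a ⟨cutSection a (p : ℂ × ℂ × ℝ), cutSection_mem p.2⟩
        ⟨cutSection a (q : ℂ × ℂ × ℝ), cutSection_mem q.2⟩ :=
      ((orbitRel_equiv a).eqvGen_iff).mp (Quot.eq.mp h)
    obtain ⟨t, ht⟩ := h'
    have hu : (q : ℂ × ℂ × ℝ).1
        = Complex.exp (-(2 * (Real.pi : ℂ) * Complex.I * (t : ℂ))) * (p : ℂ × ℂ × ℝ).1 :=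
      congrArg Prod.fst ht
    have hv : (q : ℂ × ℂ × ℝ).2.1
        = Complex.exp (2 * (Real.pi : ℂ) * Complex.I * (a : ℂ) * (t : ℂ))
          * (p : ℂ × ℂ × ℝ).2.1 := congrArg (fun x => x.2.1) ht
    have hz : (q : ℂ × ℂ × ℝ).2.2 = (p : ℂ × ℂ × ℝ).2.2 := congrArg (fun x => x.2.2.1) ht
    have hw := congrArg (fun x => x.2.2.2) ht
    simp only [cutSection, cutAction] at hw
    obtain ⟨hp1, hp2'⟩ := p.2
    have hspos : 0 < 1 - ‖(p : ℂ × ℂ × ℝ).1‖ ^ 2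
        + a * ((p : ℂ × ℂ × ℝ).2.2 + 1) / 2 := by linarith
    have habsu : ‖(q : ℂ × ℂ × ℝ).1‖ = ‖(p : ℂ × ℂ × ℝ).1‖ := by
      rw [hu, norm_mul, abs_exp_neg_two_pi, one_mul]
    have hsq : (1 - ‖(q : ℂ × ℂ × ℝ).1‖ ^ 2 + a * ((q : ℂ × ℂ × ℝ).2.2 + 1) / 2)
        = (1 - ‖(p : ℂ × ℂ × ℝ).1‖ ^ 2 + a * ((p : ℂ × ℂ × ℝ).2.2 + 1) / 2) := by
      rw [habsu, hz]
    rw [hsq] at hw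
    have hwp_ne : ((Real.sqrt (1 - ‖(p : ℂ × ℂ × ℝ).1‖ ^ 2
        + a * ((p : ℂ × ℂ × ℝ).2.2 + 1) / 2) : ℝ) : ℂ) ≠ 0 := by
      simp only [ne_eq, Complex.ofReal_eq_zero]
      positivity
    have hexp1 : Complex.exp (-(2 * (Real.pi : ℂ) * Complex.I * (t : ℂ))) = 1 := by
      have h4 : (Complex.exp (-(2 * (Real.pi : ℂ) * Complex.I * (t : ℂ))) - 1)
          * ((Real.sqrt (1 - ‖(p : ℂ × ℂ × ℝ).1‖ ^ 2
            + a * ((p : ℂ × ℂ × ℝ).2.2 + 1) / 2) : ℝ) : ℂ) = 0 := by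
        linear_combination -hw
      rcases mul_eq_zero.1 h4 with h5 | h5
      · linear_combination h5
      · exact absurd h5 hwp_ne
    obtain ⟨n, hn⟩ := Complex.exp_eq_one_iff.mp hexp1
    have htn : (t : ℝ) = -n := by
      have h2 : (t : ℂ) = ((-n : ℤ) : ℂ) := by
        have hpi : (2 * (Real.pi : ℂ) * Complex.I) ≠ 0 := by
          simp [Real.pi_ne_zero, Complex.I_ne_zero]
        have hmul : ((t : ℂ) + n) * (2 * (Real.pi : ℂ) * Complex.I) = 0 := by
          linear_combination -hn
        rcases mul_eq_zero.1 hmul with h3 | h3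
        · push_cast; linear_combination h3
        · exact absurd h3 hpi
      exact_mod_cast h2
    refine Quot.sound ⟨-n, ?_⟩
    have hueq : (q : ℂ × ℂ × ℝ).1 = (p : ℂ × ℂ × ℝ).1 := by
      rw [hu, hexp1, one_mul]
    have hveq : (q : ℂ × ℂ × ℝ).2.1
        = Complex.exp (2 * (Real.pi : ℂ) * Complex.I * (a : ℂ) * ((-n : ℤ) : ℂ))
          * (p : ℂ × ℂ × ℝ).2.1 := by
      rw [hv, htn]
      congr 3
      push_cast; ring
    calc (q : ℂ × ℂ × ℝ) = ((q : ℂ × ℂ × ℝ).1, (q : ℂ × ℂ × ℝ).2.1, (q : ℂ × ℂ × ℝ).2.2) := rfl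
      _ = ((p : ℂ × ℂ × ℝ).1,
            Complex.exp (2 * (Real.pi : ℂ) * Complex.I * (a : ℂ) * ((-n : ℤ) : ℂ))
              * (p : ℂ × ℂ × ℝ).2.1, (p : ℂ × ℂ × ℝ).2.2) := by
        rw [hueq, hveq, hz]
  · -- surjective
    rintro ⟨x⟩
    obtain ⟨⟨h1, h2⟩, h3⟩ := x.2
    set u := (x : ℂ × ℂ × ℝ × ℂ).1 with hu_def
    set v := (x : ℂ × ℂ × ℝ × ℂ).2.1 with hv_def
    set z := (x : ℂ × ℂ × ℝ × ℂ).2.2.1 with hz_def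
    set w := (x : ℂ × ℂ × ℝ × ℂ).2.2.2 with hw_def
    have hwpos : 0 < ‖w‖ := norm_pos_iff.mpr h3
    set t : ℝ := Complex.arg w / (2 * Real.pi) with ht_def
    have hexpw : Complex.exp (-(2 * (Real.pi : ℂ) * Complex.I * (t : ℂ))) * w
        = (‖w‖ : ℂ) := by
      have harg : -(2 * (Real.pi : ℂ) * Complex.I * (t : ℂ))
          = -((Complex.arg w : ℂ) * Complex.I) := by
        have hpi : (Real.pi : ℂ) ≠ 0 := by exact_mod_cast Real.pi_ne_zero
        rw [ht_def]
        push_cast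
        field_simp
      rw [harg]
      have hw1 := Complex.norm_mul_exp_arg_mul_I w
      calc Complex.exp (-((Complex.arg w : ℂ) * Complex.I)) * w
          = Complex.exp (-((Complex.arg w : ℂ) * Complex.I))
            * ((‖w‖ : ℂ) * Complex.exp ((Complex.arg w : ℂ) * Complex.I)) := by
            rw [hw1]
        _ = (‖w‖ : ℂ) * Complex.exp (-((Complex.arg w : ℂ) * Complex.I)
              + (Complex.arg w : ℂ) * Complex.I) := by rw [Complex.exp_add]; ring
        _ = (‖w‖ : ℂ) := by rw [neg_add_cancel, Complex.exp_zero, mul_one]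
    set u' := Complex.exp (-(2 * (Real.pi : ℂ) * Complex.I * (t : ℂ))) * u with hu'_def
    set v' := Complex.exp (2 * (Real.pi : ℂ) * Complex.I * (a : ℂ) * (t : ℂ)) * v with hv'_def
    have habsu' : ‖u'‖ = ‖u‖ := by
      rw [hu'_def, norm_mul, abs_exp_neg_two_pi, one_mul]
    have habsv' : ‖v'‖ = ‖v‖ := by
      rw [hv'_def, norm_mul, abs_exp_two_pi_a, one_mul]
    have hq : ((u', v', z) : ℂ × ℂ × ℝ) ∈ openPiece a := by
      constructor
      · simpa [habsv'] using h1
      · simp only [habsu']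
        have hco : ‖u‖ ^ 2 - a * (z + 1) / 2 = 1 - ‖w‖ ^ 2 := by linarith
        nlinarith
    have hsec : cutSection a ((u', v', z) : ℂ × ℂ × ℝ)
        = cutAction a t (x : ℂ × ℂ × ℝ × ℂ) := by
      have hval : 1 - ‖u'‖ ^ 2 + a * (z + 1) / 2 = ‖w‖ ^ 2 := by
        rw [habsu']; linarith
      simp only [cutSection, cutAction]
      refine Prod.ext rfl (Prod.ext rfl (Prod.ext rfl ?_))
      simp only [hval, Real.sqrt_sq (norm_nonneg w)]
      exact hexpw.symm
    refine ⟨Quot.mk _ ⟨((u', v', z) : ℂ × ℂ × ℝ), hq⟩, ?_⟩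
    simp only [hf]
    refine (Quot.sound ?_).symm
    exact ⟨t, hsec⟩
end

section
/- Let $a > 0$ be an irrational real number. Then $\{ t \in \mathbb{C} : \exists s \in \mathbb{C},\ e^{2\pi (t+s)} = 1 \text{ and } e^{2\pi i (t - s)} = 1 \text{ and } e^{2\pi i ((1-ia)t - (1+ia)s)} = 1 \} = \tfrac{1}{2}\mathbb{Z} = \{ m/2 : m \in \mathbb{Z} \}$. -/
/-!
Writing `u = t + s` and `v = t - s`, the three conditions say `u ∈ ℤ i`, `v ∈ ℤ` and
`v - i a u ∈ ℤ`. With `u = k i` the last one reads `v + a k ∈ ℤ`, which for irrational `a`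
forces `k = 0`; then `s = -t` and `2 t = v ∈ ℤ`. Conversely `s = -t` works for `t ∈ ½ ℤ`.
-/

open Complex Real

theorem Complex.exp_two_pi_mul_eq_one_iff {z : ℂ} :
    exp (2 * π * z) = 1 ↔ ∃ n : ℤ, z = n * I := by
  have h2π : (2 * π : ℂ) ≠ 0 := by simp [Real.pi_ne_zero]
  rw [exp_eq_one_iff]
  refine exists_congr fun n => ?_
  rw [show (n : ℂ) * (2 * π * I) = 2 * π * (n * I) by ring, mul_right_inj' h2π]

theorem Complex.exp_two_pi_I_mul_eq_one_iff {z : ℂ} :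
    exp (2 * π * I * z) = 1 ↔ ∃ n : ℤ, z = n := by
  rw [exp_eq_one_iff]
  refine exists_congr fun n => ?_
  rw [mul_comm (n : ℂ), mul_right_inj' two_pi_I_ne_zero]

theorem Irrational.eq_zero_of_intCast_add_mul_intCast_eq {a : ℝ} (ha : Irrational a)
    {n k m : ℤ} (h : (n : ℝ) + a * k = m) : k = 0 := by
  by_contra hk
  exact ((ha.mul_intCast hk).intCast_add n).ne_int m h

theorem stabilizer_irrational_general (a : ℝ) (hirr : Irrational a) :
    {t : ℂ | ∃ s : ℂ,
        Complex.exp (2 * (Real.pi : ℂ) * (t + s)) = 1 ∧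
        Complex.exp (2 * (Real.pi : ℂ) * Complex.I * (t - s)) = 1 ∧
        Complex.exp (2 * (Real.pi : ℂ) * Complex.I *
          ((1 - Complex.I * (a : ℂ)) * t - (1 + Complex.I * (a : ℂ)) * s)) = 1} =
      {t : ℂ | ∃ m : ℤ, t = (m : ℂ) / 2} := by
  ext t
  simp only [Set.mem_ofPred_eq, exp_two_pi_mul_eq_one_iff, exp_two_pi_I_mul_eq_one_iff]
  constructor
  · rintro ⟨s, ⟨k, hk⟩, ⟨n, hn⟩, ⟨m, hm⟩⟩
    have hreal : (n : ℝ) + a * k = m := by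
      have : ((n + a * k : ℝ) : ℂ) = m := by
        push_cast
        linear_combination hm - hn + I * a * hk + a * k * I_mul_I
      exact_mod_cast this
    obtain rfl := hirr.eq_zero_of_intCast_add_mul_intCast_eq hreal
    exact ⟨n, by linear_combination (hn + hk) / 2⟩
  · rintro ⟨m, rfl⟩
    exact ⟨-(m / 2), ⟨0, by push_cast; ring⟩, ⟨m, by ring⟩, ⟨m, by ring⟩⟩

/-- For `a > 0` irrational, the stabilizer
`{t ∈ ℂ : ∃ s, e^{2π(t+s)} = 1, e^{2πi(t-s)} = 1, e^{2πi((1-ia)t-(1+ia)s)} = 1}`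
equals `(1/2)ℤ`. -/
theorem stabilizer_irrational (a : ℝ) (ha : 0 < a) (hirr : Irrational a) :
    {t : ℂ | ∃ s : ℂ,
        Complex.exp (2 * (Real.pi : ℂ) * (t + s)) = 1 ∧
        Complex.exp (2 * (Real.pi : ℂ) * Complex.I * (t - s)) = 1 ∧
        Complex.exp (2 * (Real.pi : ℂ) * Complex.I *
          ((1 - Complex.I * (a : ℂ)) * t - (1 + Complex.I * (a : ℂ)) * s)) = 1} =
      {t : ℂ | ∃ m : ℤ, t = (m : ℂ) / 2} :=
  stabilizer_irrational_general a hirr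
end

section
/- Let $p, q$ be coprime positive integers and $a = p/q$. Then $\{ t \in \mathbb{C} : \exists s \in \mathbb{C},\ e^{2\pi (t+s)} = 1 \text{ and } e^{2\pi i (t - s)} = 1 \text{ and } e^{2\pi i ((1-ia)t - (1+ia)s)} = 1 \} = \{ (m + i k q)/2 : m, k \in \mathbb{Z} \}$, i.e.\ equals $\tfrac{1}{2}(\mathbb{Z} \oplus i q \mathbb{Z})$. -/
/-- For `a = p/q` with `p, q` coprime positive integers, the stabilizer
`{t ∈ ℂ : ∃ s, e^{2π(t+s)} = 1, e^{2πi(t-s)} = 1, e^{2πi((1-ia)t-(1+ia)s)} = 1}`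
equals `(1/2)(ℤ ⊕ iqℤ) = {(m + ikq)/2 : m, k ∈ ℤ}`. -/
theorem stabilizer_rational (p q : ℕ) (hp : 0 < p) (hq : 0 < q) (hpq : Nat.Coprime p q) :
    {t : ℂ | ∃ s : ℂ,
        Complex.exp (2 * (Real.pi : ℂ) * (t + s)) = 1 ∧
        Complex.exp (2 * (Real.pi : ℂ) * Complex.I * (t - s)) = 1 ∧
        Complex.exp (2 * (Real.pi : ℂ) * Complex.I *
          ((1 - Complex.I * ((p : ℂ) / (q : ℂ))) * t -
            (1 + Complex.I * ((p : ℂ) / (q : ℂ))) * s)) = 1} =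
      {t : ℂ | ∃ m k : ℤ, t = ((m : ℂ) + Complex.I * (k : ℂ) * (q : ℂ)) / 2} := by
  have hπ : (Real.pi : ℂ) ≠ 0 := Complex.ofReal_ne_zero.mpr Real.pi_ne_zero
  have h2π : (2 : ℂ) * Real.pi ≠ 0 := mul_ne_zero two_ne_zero hπ
  have hq0 : (q : ℂ) ≠ 0 := Nat.cast_ne_zero.mpr hq.ne'
  have h2πI : (2 : ℂ) * Real.pi * Complex.I ≠ 0 := mul_ne_zero h2π Complex.I_ne_zero
  ext t
  simp only [Set.mem_setOf_eq]
  constructor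
  · rintro ⟨s, h1, h2, h3⟩
    rw [Complex.exp_eq_one_iff] at h1 h2 h3
    obtain ⟨n, hn⟩ := h1
    obtain ⟨m, hm⟩ := h2
    obtain ⟨j, hj⟩ := h3
    have hts : t + s = n * Complex.I :=
      mul_left_cancel₀ h2π (hn.trans (by ring))
    have htm : t - s = m :=
      mul_left_cancel₀ h2πI (hm.trans (by ring))
    have hE : (1 - Complex.I * ((p : ℂ) / (q : ℂ))) * t -
        (1 + Complex.I * ((p : ℂ) / (q : ℂ))) * s = j :=
      mul_left_cancel₀ h2πI (hj.trans (by ring))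
    have key : (p : ℂ) * n = q * (j - m) := by
      have hI : Complex.I * Complex.I = -1 := Complex.I_mul_I
      field_simp at hE
      linear_combination hE - (q : ℂ) * htm + Complex.I * (p : ℂ) * hts +
        (p : ℂ) * (n : ℂ) * hI
    have keyZ : (p : ℤ) * n = q * (j - m) := by exact_mod_cast key
    have hcop : IsCoprime (q : ℤ) (p : ℤ) := by
      rw [Int.isCoprime_iff_gcd_eq_one]
      exact_mod_cast hpq.symm
    have hdvd : (q : ℤ) ∣ n := hcop.dvd_of_dvd_mul_left ⟨j - m, keyZ⟩
    obtain ⟨k, hk⟩ := hdvd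
    refine ⟨m, k, ?_⟩
    have : t = ((t - s) + (t + s)) / 2 := by ring
    rw [this, htm, hts, hk]
    push_cast
    ring
  · rintro ⟨m, k, rfl⟩
    refine ⟨((-m : ℂ) + Complex.I * k * q) / 2, ?_, ?_, ?_⟩
    · rw [Complex.exp_eq_one_iff]
      exact ⟨k * q, by push_cast; ring⟩
    · rw [Complex.exp_eq_one_iff]
      exact ⟨m, by push_cast; ring⟩
    · rw [Complex.exp_eq_one_iff]
      refine ⟨m + k * p, ?_⟩
      push_cast
      field_simp
      linear_combination (-2 * (q : ℂ) * p * k) * Complex.I_mul_I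
end
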